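/- arXiv:1702.00671 — 2 statements merged into one kernel-verified Lean document; each statement's English description precedes it below -/
import Mathlib

section
/- Fix δ ∈ ℂ and 1 ≤ k ≤ N−1. Then Q_{k+1}(δ) is (0,1)-upper-separable: for every 1 ≤ j ≤ k+1, the submatrix of Q_{k+1}(δ) formed by rows 1, …, j and columns j, …, k+1 has rank at most 1. Moreover, for 1 ≤ m ≤ k+1 and 1 ≤ ℓ ≤ k−m+2, the submatrix Q̃ of Q_{k+1}(δ) formed by the first m rows and the last ℓ columns has spectral norm ‖Q̃‖ = σ_{m−1}(δ)/σ_{k−ℓ+1}(δ). -/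
open Polynomial Matrix Finset

/-!
On and above its diagonal, `Q_{k+1}(δ)` is the outer product of `(conj q_i(δ))_i` with a vector
`c`, so every submatrix whose rows lie above its columns has rank at most one and spectral norm
equal to the product of the Euclidean norms of the two factors. The first factor has norm
`σ_{m-1}(δ)`; for the second, `|c_j|² = σ_j⁻² - σ_{j+1}⁻²` for `j < k` and `|c_k|² = σ_k⁻²`,
so the sum over the last `ℓ` columns telescopes to `σ_{k+1-ℓ}⁻²`.
-/

noncomputable def sigmaP (q : ℕ → Polynomial ℂ) (δ : ℂ) (k : ℕ) : ℝ :=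
  Real.sqrt (∑ j ∈ Finset.range (k + 1), ‖(q j).eval δ‖ ^ 2)

/-- `Q_{k+1}(δ)^*`, with rows and columns indexed from `0`. -/
noncomputable def QstarMat (q : ℕ → Polynomial ℂ) (δ : ℂ) (k : ℕ) :
    Matrix (Fin (k + 1)) (Fin (k + 1)) ℂ :=
  Matrix.of fun i j =>
    if (i : ℕ) = k then (-1 : ℂ) ^ k * (q (j : ℕ)).eval δ / (sigmaP q δ k : ℂ)
    else if (j : ℕ) ≤ (i : ℕ) then
      -((q (j : ℕ)).eval δ * (starRingEnd ℂ) ((q ((i : ℕ) + 1)).eval δ)) /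
        ((sigmaP q δ ((i : ℕ) + 1) : ℂ) * (sigmaP q δ (i : ℕ) : ℂ))
    else if (j : ℕ) = (i : ℕ) + 1 then ((sigmaP q δ (i : ℕ) / sigmaP q δ ((i : ℕ) + 1) : ℝ) : ℂ)
    else 0

noncomputable def specNorm {m n : ℕ} (M : Matrix (Fin m) (Fin n) ℂ) : ℝ :=
  ‖LinearMap.toContinuousLinearMap (Matrix.toEuclideanLin M)‖

open InnerProductSpace WithLp

theorem specNorm_vecMulVec {m n : ℕ} (u : Fin m → ℂ) (v : Fin n → ℂ) :
    specNorm (vecMulVec u v) = ‖toLp 2 u‖ * ‖toLp 2 v‖ := by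
  have hrankOne : toEuclideanLin (vecMulVec u v) = rankOne ℂ (toLp 2 u) (toLp 2 (star v)) := by
    rw [eq_comm, ← LinearEquiv.symm_apply_eq, symm_toEuclideanLin_rankOne]
    simp
  rw [specNorm, hrankOne]
  change ‖rankOne ℂ (toLp 2 u) (toLp 2 (star v))‖ = _
  simp [norm_rankOne, EuclideanSpace.norm_eq]

section
variable (q : ℕ → Polynomial ℂ) (δ : ℂ)

theorem sigmaP_sq (k : ℕ) : sigmaP q δ k ^ 2 = ∑ j ∈ range (k + 1), ‖(q j).eval δ‖ ^ 2 :=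
  Real.sq_sqrt (sum_nonneg fun _ _ => sq_nonneg _)

theorem sigmaP_succ_sq (k : ℕ) :
    sigmaP q δ (k + 1) ^ 2 = sigmaP q δ k ^ 2 + ‖(q (k + 1)).eval δ‖ ^ 2 := by
  rw [sigmaP_sq, sigmaP_sq, sum_range_succ]

noncomputable def QUpperCoeff (k j : ℕ) : ℂ :=
  if j = k then (-1) ^ k / (sigmaP q δ k : ℂ)
  else -(q (j + 1)).eval δ / ((sigmaP q δ (j + 1) : ℂ) * (sigmaP q δ j : ℂ))

theorem conjTranspose_QstarMat_apply_of_le {k : ℕ} {i j : Fin (k + 1)} (hij : (i : ℕ) ≤ j) :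
    (QstarMat q δ k)ᴴ i j = starRingEnd ℂ ((q i).eval δ) * QUpperCoeff q δ k j := by
  simp only [conjTranspose_apply, QstarMat, of_apply, QUpperCoeff]
  split_ifs with hjk
  · simp only [Complex.star_def, map_div₀, map_mul, map_pow, map_neg, map_one,
      Complex.conj_ofReal]
    ring
  · simp only [Complex.star_def, map_div₀, map_mul, map_neg, Complex.conj_ofReal,
      Complex.conj_conj]
    ring

theorem submatrix_conjTranspose_QstarMat {k a b : ℕ} (r : Fin a → Fin (k + 1))
    (c : Fin b → Fin (k + 1)) (hrc : ∀ i t, (r i : ℕ) ≤ c t) :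
    (QstarMat q δ k)ᴴ.submatrix r c =
      vecMulVec (fun i => starRingEnd ℂ ((q (r i)).eval δ)) (fun t => QUpperCoeff q δ k (c t)) :=
  Matrix.ext fun i t => conjTranspose_QstarMat_apply_of_le q δ (hrc i t)

theorem norm_toLp_conj_eval {m : ℕ} (hm : 1 ≤ m) :
    ‖toLp 2 (fun i : Fin m => starRingEnd ℂ ((q i).eval δ))‖ = sigmaP q δ (m - 1) := by
  rw [EuclideanSpace.norm_eq, sigmaP, Nat.sub_add_cancel hm,
    ← Fin.sum_univ_eq_sum_range (fun j => ‖(q j).eval δ‖ ^ 2)]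
  simp

variable {q δ} (h0 : (q 0).eval δ ≠ 0)
include h0

theorem sigmaP_pos (k : ℕ) : 0 < sigmaP q δ k :=
  Real.sqrt_pos.2 <| lt_of_lt_of_le (by positivity)
    (single_le_sum (fun j _ => sq_nonneg ‖(q j).eval δ‖) (mem_range.2 k.succ_pos))

theorem norm_sq_QUpperCoeff_self (k : ℕ) :
    ‖QUpperCoeff q δ k k‖ ^ 2 = (sigmaP q δ k ^ 2)⁻¹ := by
  rw [QUpperCoeff, if_pos rfl, norm_div, norm_pow, norm_neg, norm_one, one_pow,
    Complex.norm_real, Real.norm_of_nonneg (sigmaP_pos h0 k).le, one_div, inv_pow]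

theorem norm_sq_QUpperCoeff_of_lt {k j : ℕ} (hj : j < k) :
    ‖QUpperCoeff q δ k j‖ ^ 2 = (sigmaP q δ j ^ 2)⁻¹ - (sigmaP q δ (j + 1) ^ 2)⁻¹ := by
  have hσ := sigmaP_pos h0 j
  have hσ' := sigmaP_pos h0 (j + 1)
  rw [QUpperCoeff, if_neg hj.ne, norm_div, norm_neg, norm_mul, Complex.norm_real,
    Complex.norm_real, Real.norm_of_nonneg hσ.le, Real.norm_of_nonneg hσ'.le, div_pow, mul_pow,
    sigmaP_succ_sq q δ j]
  field_simp
  ring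

theorem sum_Ico_norm_sq_QUpperCoeff {k a : ℕ} (ha : a ≤ k) :
    ∑ j ∈ Ico a (k + 1), ‖QUpperCoeff q δ k j‖ ^ 2 = (sigmaP q δ a ^ 2)⁻¹ := by
  rw [sum_Ico_succ_top ha, norm_sq_QUpperCoeff_self h0,
    sum_congr rfl fun j hj => norm_sq_QUpperCoeff_of_lt h0 (mem_Ico.1 hj).2]
  have htelescope := sum_Ico_sub (fun j => -(sigmaP q δ j ^ 2)⁻¹) ha
  simp only [neg_sub_neg] at htelescope
  rw [htelescope]
  ring

theorem norm_toLp_QUpperCoeff {k ℓ : ℕ} (hℓ1 : 1 ≤ ℓ) (hℓ : ℓ ≤ k + 1) :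
    ‖toLp 2 (fun t : Fin ℓ => QUpperCoeff q δ k (k + 1 - ℓ + t))‖ =
      (sigmaP q δ (k + 1 - ℓ))⁻¹ := by
  have hsum : ∑ t : Fin ℓ, ‖QUpperCoeff q δ k (k + 1 - ℓ + t)‖ ^ 2 =
      ∑ j ∈ Ico (k + 1 - ℓ) (k + 1), ‖QUpperCoeff q δ k j‖ ^ 2 := by
    rw [Fin.sum_univ_eq_sum_range (fun t => ‖QUpperCoeff q δ k (k + 1 - ℓ + t)‖ ^ 2),
      sum_Ico_eq_sum_range, Nat.sub_sub_self hℓ]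
  rw [EuclideanSpace.norm_eq, hsum, sum_Ico_norm_sq_QUpperCoeff h0 (by omega), Real.sqrt_inv,
    Real.sqrt_sq (sigmaP_pos h0 _).le]

end

/-- `Q_{k+1}(δ)` is `(0,1)`-upper-separable: every submatrix formed by
rows `1..j` and columns `j..k+1` has rank at most `1`; moreover the submatrix of the first
`m` rows and last `ℓ` columns has spectral norm `σ_{m-1}(δ)/σ_{k-ℓ+1}(δ)`. -/
theorem stmt5 (q : ℕ → Polynomial ℂ) (hq0 : q 0 = 1) (δ : ℂ) (k : ℕ) :
    (∀ (j : ℕ) (hj1 : 1 ≤ j) (hj : j ≤ k + 1),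
      Matrix.rank
          (((QstarMat q δ k)ᴴ).submatrix (Fin.castLE hj)
            (fun t : Fin (k + 1 + 1 - j) =>
              (⟨j - 1 + (t : ℕ), by have := t.isLt; omega⟩ : Fin (k + 1)))) ≤ 1) ∧
    (∀ (m ℓ : ℕ) (hm1 : 1 ≤ m) (hm : m ≤ k + 1) (hℓ1 : 1 ≤ ℓ) (hℓ : ℓ + m ≤ k + 2),
      specNorm
          (((QstarMat q δ k)ᴴ).submatrix (Fin.castLE hm)
            (fun t : Fin ℓ =>
              (⟨k + 1 - ℓ + (t : ℕ), by have := t.isLt; omega⟩ : Fin (k + 1)))) =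
        sigmaP q δ (m - 1) / sigmaP q δ (k + 1 - ℓ)) := by
  have h0 : (q 0).eval δ ≠ 0 := by simp [hq0]
  refine ⟨fun j hj1 hj => ?_, fun m ℓ hm1 hm hℓ1 hℓ => ?_⟩
  · rw [submatrix_conjTranspose_QstarMat q δ _ _ fun i t => by simp only [Fin.val_castLE]; omega]
    exact rank_vecMulVec_le _ _
  · rw [submatrix_conjTranspose_QstarMat q δ _ _ fun i t => by simp only [Fin.val_castLE]; omega,
      specNorm_vecMulVec]
    simp only [Fin.val_castLE]
    rw [norm_toLp_conj_eval q δ hm1, norm_toLp_QUpperCoeff h0 hℓ1 (by omega),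
      div_eq_mul_inv]
end

section
/- For every δ ∈ ℂ and 1 ≤ k ≤ N−1, define τ_k(δ) := (−1)^{k−1}·w_{k−1}(δ)^*·(A − δI_n)·v_k. Then s_k(δ) = h_{k+1,k}/√(h_{k+1,k}² + |τ_k(δ)|²) and c_k(δ) = τ_k(δ)/√(h_{k+1,k}² + |τ_k(δ)|²). -/
/-!
Put `ρ_k = Σ_{j ≤ k} conj(q_j(δ)) v_{j+1}`. Since the Arnoldi basis is orthonormal, the inner
product of `ρ_k` with `(A - δI) v_j = Σ_{i ≤ j+1} (H - δI)_{ij} v_i` is the left side of the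
recurrence defining the `q_i`, so `ρ_k ⊥ (A - δI) v_j` for `j ≤ k`. The same recurrence, read as a
triangular system for the coordinates of a vector of `span{v_1, …, v_{k+1}}` orthogonal to these
`(A - δI) v_j`, shows that such a vector is a multiple of `ρ_k`. The GMRES residual is such a
vector, and `⟨ρ_k, r_k⟩ = ⟨ρ_k, b⟩ = ‖b‖ > 0`, so `w_k = ρ_k / σ_k`. Then
`τ_k = (-1)^k h_{k+1,k} q_k(δ) / σ_{k-1}`, and both formulas follow from
`σ_k² = σ_{k-1}² + |q_k(δ)|²`.
-/

open Polynomial Matrix Finset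

/-- The standard inner product `x^* y` on `ℂ^n` (conjugate-linear in the first slot). -/
noncomputable def inn {n : ℕ} (x y : Fin n → ℂ) : ℂ := ∑ i, (starRingEnd ℂ) (x i) * y i

/-- The Euclidean norm on `ℂ^n`. -/
noncomputable def nrm {n : ℕ} (x : Fin n → ℂ) : ℝ := Real.sqrt (inn x x).re

open scoped InnerProductSpace ComplexConjugate

section InnerProductSpace

variable {𝕜 E : Type*} [RCLike 𝕜] [NormedAddCommGroup E] [InnerProductSpace 𝕜 E]

theorem eq_zero_of_mem_span_of_inner_eq_zero {s : Set E} {y : E} (hy : y ∈ Submodule.span 𝕜 s)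
    (h : ∀ z ∈ s, ⟪y, z⟫_𝕜 = 0) : y = 0 := by
  have hy' : y ∈ (𝕜 ∙ y)ᗮ := Submodule.span_le.2
    (fun z hz => Submodule.mem_orthogonal_singleton_iff_inner_right.2 (h z hz)) hy
  exact inner_self_eq_zero.1 (Submodule.mem_orthogonal_singleton_iff_inner_right.1 hy')

theorem inner_sum_smul_of_orthonormal {N : ℕ} {v : ℕ → E}
    (hv : Orthonormal 𝕜 fun i : Fin N => v i)
    {l k : ℕ} (hl : l < N) (hk : k ≤ N) (c : ℕ → 𝕜) :
    ⟪v l, ∑ i ∈ range k, c i • v i⟫_𝕜 = if l < k then c l else 0 := by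
  have hvl : ∀ i < N, ⟪v l, v i⟫_𝕜 = if l = i then 1 else 0 := fun i hi => by
    simpa [Fin.ext_iff] using orthonormal_iff_ite.1 hv ⟨l, hl⟩ ⟨i, hi⟩
  rw [inner_sum, sum_congr rfl fun i hi => by
    rw [inner_smul_right, hvl i (by simp at hi; omega), mul_ite, mul_one, mul_zero]]
  simp [sum_ite_eq]

theorem eq_mul_of_hessenberg_recurrence {K : Type*} [CommRing K] [IsDomain K]
    {M : ℕ → ℕ → K} {a p : ℕ → K} {m : ℕ} (hM : ∀ j < m, M (j + 1) j ≠ 0)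
    (ha : ∀ j < m, ∑ i ∈ range (j + 2), M i j * a i = 0)
    (hp : ∀ j < m, ∑ i ∈ range (j + 2), M i j * p i = 0) (hp0 : p 0 = 1) :
    ∀ i ≤ m, a i = a 0 * p i := by
  intro i hi
  induction i using Nat.strong_induction_on with
  | _ i ih =>
    rcases i with _ | j
    · rw [hp0, mul_one]
    have hj : j < m := by omega
    have hlower :
        ∑ i ∈ range (j + 1), M i j * a i = a 0 * ∑ i ∈ range (j + 1), M i j * p i := by
      rw [mul_sum]
      refine sum_congr rfl fun i hi => ?_
      rw [mem_range] at hi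
      rw [ih i (by omega) (by omega)]
      ring
    have ha' := ha j hj
    have hp' := hp j hj
    rw [sum_range_succ] at ha' hp'
    apply mul_left_cancel₀ (hM j hj)
    linear_combination ha' - a 0 * hp' - hlower

theorem sum_range_smul_mem_span_image {v : ℕ → E} {k m : ℕ} (hk : k ≤ m + 1) (c : ℕ → 𝕜) :
    ∑ i ∈ range k, c i • v i ∈ Submodule.span 𝕜 (v '' Set.Iic m) :=
  Submodule.sum_smul_mem _ _ fun i hi =>
    Submodule.subset_span ⟨i, Set.mem_Iic.2 (by simp only [mem_range] at hi; omega), rfl⟩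

def residualDirection (p : ℕ → 𝕜) (v : ℕ → E) (m : ℕ) : E :=
  ∑ i ∈ range (m + 1), conj (p i) • v i

section residualDirection

variable {N m : ℕ} {v : ℕ → E} {p : ℕ → 𝕜}

theorem inner_residualDirection_basis
    (hv : Orthonormal 𝕜 fun i : Fin N => v i) (hmN : m < N) {l : ℕ} (hl : l < N) :
    ⟪residualDirection p v m, v l⟫_𝕜 = if l ≤ m then p l else 0 := by
  rw [← inner_conj_symm, residualDirection, inner_sum_smul_of_orthonormal hv hl hmN]
  split_ifs <;> simp_all

theorem inner_residualDirection_sum_smul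
    (hv : Orthonormal 𝕜 fun i : Fin N => v i) (hmN : m < N) {k : ℕ} (hk : k ≤ m + 1)
    (c : ℕ → 𝕜) :
    ⟪residualDirection p v m, ∑ i ∈ range k, c i • v i⟫_𝕜 = ∑ i ∈ range k, c i * p i := by
  rw [inner_sum]
  refine sum_congr rfl fun i hi => ?_
  rw [mem_range] at hi
  rw [inner_smul_right, inner_residualDirection_basis hv hmN (by omega), if_pos (by omega)]

theorem norm_residualDirection
    (hv : Orthonormal 𝕜 fun i : Fin N => v i) (hmN : m < N) :
    ‖residualDirection p v m‖ = √(∑ i ∈ range (m + 1), ‖p i‖ ^ 2) := by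
  have h := inner_residualDirection_sum_smul (p := p) hv hmN le_rfl (fun i => conj (p i))
  rw [← residualDirection, inner_self_eq_norm_sq_to_K] at h
  simp only [RCLike.conj_mul] at h
  have h' : ‖residualDirection p v m‖ ^ 2 = ∑ i ∈ range (m + 1), ‖p i‖ ^ 2 := by exact_mod_cast h
  rw [← h', Real.sqrt_sq (norm_nonneg _)]

theorem eq_inner_smul_residualDirection
    (hv : Orthonormal 𝕜 fun i : Fin N => v i) (hmN : m < N)
    {M : ℕ → ℕ → 𝕜} {W : ℕ → E} (hW : ∀ j < m, W j = ∑ i ∈ range (j + 2), M i j • v i)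
    (hM : ∀ j < m, M (j + 1) j ≠ 0) (hp : ∀ j < m, ∑ i ∈ range (j + 2), M i j * p i = 0)
    (hp0 : p 0 = 1) {x : E} (hx : x ∈ Submodule.span 𝕜 (v '' Set.Iic m))
    (hxW : ∀ j < m, ⟪W j, x⟫_𝕜 = 0) :
    x = ⟪v 0, x⟫_𝕜 • residualDirection p v m := by
  have hcoord : ∀ j < m, ∑ i ∈ range (j + 2), M i j * ⟪x, v i⟫_𝕜 = 0 := fun j hj => by
    have h := hxW j hj
    rw [← inner_conj_symm, map_eq_zero, hW j hj, inner_sum] at h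
    simpa [inner_smul_right] using h
  have hrec := eq_mul_of_hessenberg_recurrence hM hcoord hp hp0
  rw [← sub_eq_zero]
  refine eq_zero_of_mem_span_of_inner_eq_zero (𝕜 := 𝕜) (s := v '' Set.Iic m) ?_ ?_
  · exact Submodule.sub_mem _ hx (Submodule.smul_mem _ _ (sum_range_smul_mem_span_image le_rfl _))
  · rintro _ ⟨l, hl, rfl⟩
    rw [Set.mem_Iic] at hl
    rw [inner_sub_left, inner_smul_left, inner_conj_symm,
      inner_residualDirection_basis hv hmN (by omega), if_pos hl, hrec l hl, sub_self]

theorem residualDirection_ne_zero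
    (hv : Orthonormal 𝕜 fun i : Fin N => v i) (hmN : m < N)
    (hp0 : p 0 ≠ 0) : residualDirection p v m ≠ 0 := by
  intro h
  have h0 := inner_residualDirection_basis (p := p) hv hmN (l := 0) (by omega)
  rw [h, inner_zero_left, if_pos (Nat.zero_le m)] at h0
  exact hp0 h0.symm

theorem sub_eq_smul_residualDirection
    (hv : Orthonormal 𝕜 fun i : Fin N => v i) (hmN : m < N)
    {M : ℕ → ℕ → 𝕜} {W : ℕ → E} (hW : ∀ j < m, W j = ∑ i ∈ range (j + 2), M i j • v i)
    (hM : ∀ j < m, M (j + 1) j ≠ 0) (hp : ∀ j < m, ∑ i ∈ range (j + 2), M i j * p i = 0)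
    (hp0 : p 0 = 1) {β : ℝ} {b u : E} (hb : b = (β : 𝕜) • v 0)
    (hu : u ∈ Submodule.span 𝕜 (W '' Set.Iio m)) (hperp : ∀ j < m, ⟪W j, b - u⟫_𝕜 = 0) :
    b - u = ((β / ‖residualDirection p v m‖ ^ 2 : ℝ) : 𝕜) • residualDirection p v m := by
  set ρ := residualDirection p v m
  have hx : b - u ∈ Submodule.span 𝕜 (v '' Set.Iic m) := by
    refine Submodule.sub_mem _ ?_ (Submodule.span_le.2 ?_ hu)
    · exact hb ▸ Submodule.smul_mem _ _ (Submodule.subset_span ⟨0, Nat.zero_le m, rfl⟩)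
    · rintro _ ⟨j, hj, rfl⟩
      exact (hW j hj).symm ▸ sum_range_smul_mem_span_image (by rw [Set.mem_Iio] at hj; omega) _
  obtain ⟨c, hc⟩ : ∃ c : 𝕜, b - u = c • ρ :=
    ⟨_, eq_inner_smul_residualDirection hv hmN hW hM hp hp0 hx hperp⟩
  have hρu : ⟪ρ, u⟫_𝕜 = 0 := by
    refine Submodule.mem_orthogonal_singleton_iff_inner_right.1 (Submodule.span_le.2 ?_ hu)
    rintro _ ⟨j, hj, rfl⟩
    rw [Set.mem_Iio] at hj
    refine Submodule.mem_orthogonal_singleton_iff_inner_right.2 ?_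
    rw [hW j hj, inner_residualDirection_sum_smul hv hmN (by omega), hp j hj]
  have hρb : ⟪ρ, b⟫_𝕜 = β := by
    rw [hb, inner_smul_right, inner_residualDirection_basis hv hmN (by omega),
      if_pos (Nat.zero_le m), hp0, mul_one]
  have hρ : (‖ρ‖ : 𝕜) ≠ 0 := by
    simpa using residualDirection_ne_zero hv hmN (by simp [hp0])
  have hcβ : c * (‖ρ‖ : 𝕜) ^ 2 = β := by
    rw [← inner_self_eq_norm_sq_to_K, ← inner_smul_right, ← hc, inner_sub_right, hρu, hρb,
      sub_zero]
  rw [hc, RCLike.ofReal_div, ← hcβ]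
  push_cast
  rw [mul_div_cancel_right₀ _ (pow_ne_zero 2 hρ)]

theorem inv_norm_smul_ofReal_smul {t : ℝ} (ht : 0 < t) (x : E) :
    ((‖(t : 𝕜) • x‖⁻¹ : ℝ) : 𝕜) • ((t : 𝕜) • x) = ((‖x‖⁻¹ : ℝ) : 𝕜) • x := by
  rw [norm_smul, RCLike.norm_ofReal, abs_of_pos ht, smul_smul, ← RCLike.ofReal_mul, mul_inv,
    mul_right_comm, inv_mul_cancel₀ ht.ne', one_mul]

theorem normalized_residual_eq
    (hv : Orthonormal 𝕜 fun i : Fin N => v i) (hmN : m < N)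
    {M : ℕ → ℕ → 𝕜} {W : ℕ → E} (hW : ∀ j < m, W j = ∑ i ∈ range (j + 2), M i j • v i)
    (hM : ∀ j < m, M (j + 1) j ≠ 0) (hp : ∀ j < m, ∑ i ∈ range (j + 2), M i j * p i = 0)
    (hp0 : p 0 = 1) {β : ℝ} (hβ : 0 < β) {b u : E} (hb : b = (β : 𝕜) • v 0)
    (hu : u ∈ Submodule.span 𝕜 (W '' Set.Iio m)) (hperp : ∀ j < m, ⟪W j, b - u⟫_𝕜 = 0) :
    ((‖b - u‖⁻¹ : ℝ) : 𝕜) • (b - u) =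
      ((‖residualDirection p v m‖⁻¹ : ℝ) : 𝕜) • residualDirection p v m := by
  have hρ := norm_pos_iff.2 (residualDirection_ne_zero hv hmN (p := p) (by simp [hp0]))
  rw [sub_eq_smul_residualDirection hv hmN hW hM hp hp0 hb hu hperp,
    inv_norm_smul_ofReal_smul (by positivity)]

theorem inner_residualDirection_next
    (hv : Orthonormal 𝕜 fun i : Fin N => v i) (hmN : m + 1 < N)
    {M : ℕ → ℕ → 𝕜} {w : E} (hw : w = ∑ i ∈ range (m + 2), M i m • v i)
    (hp : ∑ i ∈ range (m + 2), M i m * p i = 0) :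
    ⟪residualDirection p v m, w⟫_𝕜 = -(M (m + 1) m * p (m + 1)) := by
  rw [hw, sum_range_succ, inner_add_right, inner_residualDirection_sum_smul hv (by omega) le_rfl,
    inner_smul_right, inner_residualDirection_basis hv (by omega) hmN, if_neg (by omega),
    mul_zero, add_zero]
  rw [sum_range_succ] at hp
  linear_combination hp

end residualDirection

theorem givens_eq_of_tau {σ σ' h : ℝ} {z τ : 𝕜} (hσ : 0 < σ) (hh : 0 < h)
    (hσ' : σ' = √(σ ^ 2 + ‖z‖ ^ 2)) (hτ : τ = (h : 𝕜) * z / (σ : 𝕜)) :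
    σ / σ' = h / √(h ^ 2 + ‖τ‖ ^ 2) ∧ z / (σ' : 𝕜) = τ / ((√(h ^ 2 + ‖τ‖ ^ 2) : ℝ) : 𝕜) := by
  have hnorm : ‖τ‖ = h * ‖z‖ / σ := by
    rw [hτ, norm_div, norm_mul, RCLike.norm_ofReal, RCLike.norm_ofReal, abs_of_pos hh,
      abs_of_pos hσ]
  have hσ'pos : 0 < σ' := hσ' ▸ Real.sqrt_pos.2 (by positivity)
  have hσ'sq : σ' ^ 2 = σ ^ 2 + ‖z‖ ^ 2 := hσ' ▸ Real.sq_sqrt (by positivity)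
  have hsqrt : √(h ^ 2 + ‖τ‖ ^ 2) = h * σ' / σ := by
    rw [← Real.sqrt_sq (by positivity : 0 ≤ h * σ' / σ), hnorm]
    congr 1
    simp only [div_pow, mul_pow, hσ'sq]
    field_simp
  have hσC : (σ : 𝕜) ≠ 0 := RCLike.ofReal_ne_zero.2 hσ.ne'
  have hσ'C : (σ' : 𝕜) ≠ 0 := RCLike.ofReal_ne_zero.2 hσ'pos.ne'
  have hhC : (h : 𝕜) ≠ 0 := RCLike.ofReal_ne_zero.2 hh.ne'
  rw [hsqrt]
  constructor
  · field_simp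
  · rw [hτ]
    push_cast
    field_simp

end InnerProductSpace

theorem inn_eq_inner {n : ℕ} (x y : Fin n → ℂ) :
    inn x y = ⟪WithLp.toLp 2 x, WithLp.toLp 2 y⟫_ℂ := by
  simp [inn, PiLp.inner_apply, mul_comm]

theorem nrm_eq_norm {n : ℕ} (x : Fin n → ℂ) : nrm x = ‖WithLp.toLp 2 x‖ := by
  rw [nrm, inn_eq_inner, norm_eq_sqrt_re_inner (𝕜 := ℂ)]
  rfl

theorem sigmaP_succ (q : ℕ → ℂ[X]) (δ : ℂ) (k : ℕ) :
    sigmaP q δ (k + 1) = √(sigmaP q δ k ^ 2 + ‖(q (k + 1)).eval δ‖ ^ 2) := by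
  rw [sigmaP, sigmaP, sum_range_succ, Real.sq_sqrt (sum_nonneg fun _ _ => sq_nonneg _)]

theorem toLp_mem_span_image {K V : Type*} [Semiring K] [AddCommGroup V] [Module K V]
    {p : ENNReal} {f : ℕ → V} {m : ℕ} {x : V}
    (hx : x ∈ Submodule.span K {y | ∃ j < m, y = f j}) :
    WithLp.toLp p x ∈ Submodule.span K ((fun j => WithLp.toLp p (f j)) '' Set.Iio m) := by
  have h := Submodule.mem_map_of_mem (f := (WithLp.linearEquiv p K V).symm.toLinearMap) hx
  rw [Submodule.map_span] at h
  convert h using 2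
  · ext y
    simp [eq_comm]
  · rfl

def natEntry {R : Type*} [Zero R] {N : ℕ} (H : Matrix (Fin N) (Fin N) R) (i j : ℕ) : R :=
  if h : i < N ∧ j < N then H ⟨i, h.1⟩ ⟨j, h.2⟩ else 0

section natEntry

variable {R : Type*} {N : ℕ}

theorem natEntry_of_lt [Zero R] (H : Matrix (Fin N) (Fin N) R) {i j : ℕ} (hi : i < N)
    (hj : j < N) : natEntry H i j = H ⟨i, hi⟩ ⟨j, hj⟩ :=
  dif_pos ⟨hi, hj⟩

theorem natEntry_sub_smul_one [Ring R] (H : Matrix (Fin N) (Fin N) R) (δ : R) {i j : ℕ}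
    (hj : j < N) : natEntry (H - δ • 1) i j = natEntry H i j - if i = j then δ else 0 := by
  by_cases hi : i < N
  · simp [natEntry_of_lt _ hi hj, Matrix.one_apply, Fin.ext_iff]
  · simp [natEntry, hi, show i ≠ j by omega]

theorem natEntry_sub_smul_one_succ [Ring R] (H : Matrix (Fin N) (Fin N) R) (δ : R) {j : ℕ}
    (hj : j + 1 < N) :
    natEntry (H - δ • 1) (j + 1) j = H ⟨j + 1, hj⟩ ⟨j, Nat.lt_of_succ_lt hj⟩ := by
  rw [natEntry_sub_smul_one H δ (by omega), if_neg (by omega), sub_zero, natEntry_of_lt]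

theorem sum_range_sub_ite_smul {M : Type*} [Ring R] [AddCommGroup M] [Module R M] (c : ℕ → R)
    (x : ℕ → M) (δ : R) {j l : ℕ} (hj : j < l) :
    ∑ i ∈ range l, (c i - if i = j then δ else 0) • x i = ∑ i ∈ range l, c i • x i - δ • x j := by
  simp only [sub_smul, sum_sub_distrib, ite_smul, zero_smul, sum_ite_eq', mem_range, if_pos hj]

theorem mulVec_sub_smul_one_eq_sum [CommRing R] {n : ℕ} {A : Matrix (Fin n) (Fin n) R}
    {v : ℕ → Fin n → R} {H : Matrix (Fin N) (Fin N) R} {k : ℕ} (hk : k + 1 < N)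
    (harn : A.mulVec (v k) = ∑ j : Fin (k + 2),
        H ⟨(j : ℕ), Nat.lt_of_le_of_lt (Nat.lt_succ_iff.mp j.isLt) hk⟩
          ⟨k, Nat.lt_of_succ_lt hk⟩ • v (j : ℕ)) (δ : R) :
    (A - δ • 1) *ᵥ v k = ∑ i ∈ range (k + 2), natEntry (H - δ • 1) i k • v i := by
  rw [sum_congr rfl fun i _ => by rw [natEntry_sub_smul_one H δ (Nat.lt_of_succ_lt hk)],
    sum_range_sub_ite_smul _ _ _ (by omega), sub_mulVec, smul_mulVec, one_mulVec, harn,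
    ← Fin.sum_univ_eq_sum_range]
  congr 1
  refine sum_congr rfl fun j _ => ?_
  rw [natEntry_of_lt]

theorem sum_natEntry_sub_smul_one_mul_eval [CommRing R] {H : Matrix (Fin N) (Fin N) R}
    {q : ℕ → R[X]} {k : ℕ} (hk : k + 1 < N)
    (hqrec : C (H ⟨k + 1, hk⟩ ⟨k, Nat.lt_of_succ_lt hk⟩) * q (k + 1) =
        X * q k - ∑ j : Fin (k + 1),
          C (H ⟨(j : ℕ), Nat.lt_trans j.isLt hk⟩ ⟨k, Nat.lt_of_succ_lt hk⟩) * q (j : ℕ))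
    (δ : R) :
    ∑ i ∈ range (k + 2), natEntry (H - δ • 1) i k * (q i).eval δ = 0 := by
  have h := congrArg (eval δ) hqrec
  simp only [eval_mul, eval_C, eval_X, eval_sub, eval_finsetSum] at h
  rw [sum_congr rfl fun i _ => by rw [natEntry_sub_smul_one H δ (Nat.lt_of_succ_lt hk)]]
  simp only [← smul_eq_mul]
  rw [sum_range_sub_ite_smul _ _ _ (by omega), sum_range_succ, ← Fin.sum_univ_eq_sum_range,
    natEntry_of_lt H hk (Nat.lt_of_succ_lt hk)]
  simp only [smul_eq_mul, natEntry_of_lt H (Nat.lt_trans (Fin.isLt _) hk) (Nat.lt_of_succ_lt hk)]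
  linear_combination h

end natEntry

-- Indices are 0-based: the paper's `v_k` is `v (k - 1)` and `h_{k+1,k}` is
-- `(H ⟨k, _⟩ ⟨k - 1, _⟩).re`.
theorem stmt11_general (n N : ℕ)
    (A : Matrix (Fin n) (Fin n) ℂ) (b : Fin n → ℂ) (hb : b ≠ 0)
    (v : ℕ → Fin n → ℂ)
    (horth : ∀ i j : ℕ, i < N → j < N → inn (v i) (v j) = if i = j then 1 else 0)
    (hv1 : v 0 = (((nrm b)⁻¹ : ℝ) : ℂ) • b)
    (H : Matrix (Fin N) (Fin N) ℂ)
    (hsub : ∀ (k : ℕ) (hk : k + 1 < N),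
      0 < (H ⟨k + 1, hk⟩ ⟨k, Nat.lt_of_succ_lt hk⟩).re ∧
        (H ⟨k + 1, hk⟩ ⟨k, Nat.lt_of_succ_lt hk⟩).im = 0)
    (harn : ∀ (k : ℕ) (hk : k + 1 < N),
      A.mulVec (v k) = ∑ j : Fin (k + 2),
        H ⟨(j : ℕ), Nat.lt_of_le_of_lt (Nat.lt_succ_iff.mp j.isLt) hk⟩
          ⟨k, Nat.lt_of_succ_lt hk⟩ • v (j : ℕ))
    (q : ℕ → Polynomial ℂ) (hq0 : q 0 = 1)
    (hqrec : ∀ (k : ℕ) (hk : k + 1 < N),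
      Polynomial.C (H ⟨k + 1, hk⟩ ⟨k, Nat.lt_of_succ_lt hk⟩) * q (k + 1) =
        Polynomial.X * q k -
          ∑ j : Fin (k + 1),
            Polynomial.C (H ⟨(j : ℕ), Nat.lt_trans j.isLt hk⟩ ⟨k, Nat.lt_of_succ_lt hk⟩) *
              q (j : ℕ))
    (u : ℂ → ℕ → Fin n → ℂ)
    (humem : ∀ (δ : ℂ) (k : ℕ), k < N →
      u δ k ∈ Submodule.span ℂ {x : Fin n → ℂ | ∃ j < k, x = (A - δ • 1).mulVec (v j)})
    (huperp : ∀ (δ : ℂ) (k : ℕ), k < N →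
      ∀ y ∈ Submodule.span ℂ {x : Fin n → ℂ | ∃ j < k, x = (A - δ • 1).mulVec (v j)},
        inn y (b - u δ k) = 0)
    (r : ℂ → ℕ → Fin n → ℂ) (hr : ∀ δ k, r δ k = b - u δ k)
    (w : ℂ → ℕ → Fin n → ℂ) (hw : ∀ δ k, w δ k = (((nrm (r δ k))⁻¹ : ℝ) : ℂ) • r δ k)
 :
    ∀ (δ : ℂ) (k : ℕ) (hk1 : 1 ≤ k) (hkN : k < N) (τ : ℂ),
      τ = (-1 : ℂ) ^ (k - 1) * inn (w δ (k - 1)) ((A - δ • 1).mulVec (v (k - 1))) →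
      sigmaP q δ (k - 1) / sigmaP q δ k =
        (H ⟨k, hkN⟩ ⟨k - 1, Nat.lt_of_le_of_lt (Nat.sub_le k 1) hkN⟩).re /
          Real.sqrt ((H ⟨k, hkN⟩ ⟨k - 1, Nat.lt_of_le_of_lt (Nat.sub_le k 1) hkN⟩).re ^ 2 +
            ‖τ‖ ^ 2) ∧
      (-1 : ℂ) ^ k * (q k).eval δ / (sigmaP q δ k : ℂ) =
        τ / ((Real.sqrt ((H ⟨k, hkN⟩ ⟨k - 1, Nat.lt_of_le_of_lt (Nat.sub_le k 1) hkN⟩).re ^ 2 +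
            ‖τ‖ ^ 2) : ℝ) : ℂ) := by
  intro δ k hk1 hkN τ hτ
  obtain ⟨m, rfl⟩ : ∃ m, k = m + 1 := ⟨k - 1, by omega⟩
  simp only [Nat.add_sub_cancel] at hτ ⊢
  have hmN : m < N := by omega
  set v' : ℕ → EuclideanSpace ℂ (Fin n) := fun i => WithLp.toLp 2 (v i)
  set W : ℕ → EuclideanSpace ℂ (Fin n) := fun j => WithLp.toLp 2 ((A - δ • 1) *ᵥ v j)
  set p : ℕ → ℂ := fun i => (q i).eval δ
  set ρ := residualDirection p v' m
  have hv : Orthonormal ℂ fun i : Fin N => v' i := orthonormal_iff_ite.2 fun i j => by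
    simpa only [inn_eq_inner, Fin.ext_iff] using horth i j i.2 j.2
  have hW (j : ℕ) (hj : j + 1 < N) :
      W j = ∑ i ∈ range (j + 2), natEntry (H - δ • 1) i j • v' i := by
    simp only [W, v', mulVec_sub_smul_one_eq_sum hj (harn j hj), WithLp.toLp_sum,
      WithLp.toLp_smul]
  have hp (j : ℕ) (hj : j + 1 < N) := sum_natEntry_sub_smul_one_mul_eval hj (hqrec j hj) δ
  have hsubdiag (j : ℕ) (hj : j + 1 < N) :
      natEntry (H - δ • 1) (j + 1) j = ((H ⟨j + 1, hj⟩ ⟨j, Nat.lt_of_succ_lt hj⟩).re : ℂ) := by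
    rw [natEntry_sub_smul_one_succ H δ hj]
    exact Complex.ext rfl (by simp [(hsub j hj).2])
  have hnb : 0 < nrm b := nrm_eq_norm b ▸ norm_pos_iff.2 fun h => hb (congrArg WithLp.ofLp h)
  have hb' : WithLp.toLp 2 b = ((nrm b : ℝ) : ℂ) • v' 0 := by
    simp only [v', hv1, WithLp.toLp_smul, smul_smul, ← Complex.ofReal_mul,
      mul_inv_cancel₀ hnb.ne', Complex.ofReal_one, one_smul]
  have hwρ : WithLp.toLp 2 (w δ m) = ((‖ρ‖⁻¹ : ℝ) : ℂ) • ρ := by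
    rw [hw, hr, WithLp.toLp_smul, nrm_eq_norm, WithLp.toLp_sub]
    refine normalized_residual_eq hv hmN (fun j hj => hW j (by omega)) (fun j hj => ?_)
      (fun j hj => hp j (by omega)) (by simp [hq0]) hnb hb'
      (toLp_mem_span_image (humem δ m hmN)) fun j hj => ?_
    · rw [hsubdiag j (by omega)]
      exact_mod_cast (hsub j (by omega)).1.ne'
    · rw [← WithLp.toLp_sub, ← inn_eq_inner]
      exact huperp δ m hmN _ (Submodule.subset_span ⟨j, hj, rfl⟩)
  have hσ : sigmaP q δ m = ‖ρ‖ := (norm_residualDirection hv hmN).symm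
  have hρ : 0 < ‖ρ‖ := norm_pos_iff.2 (residualDirection_ne_zero hv hmN (by simp [p, hq0]))
  refine givens_eq_of_tau (hσ ▸ hρ) (hsub m hkN).1 ?_ ?_
  · rw [sigmaP_succ, norm_mul, norm_pow, norm_neg, norm_one, one_pow, one_mul]
  · rw [hτ, inn_eq_inner, hwρ, inner_smul_left, hσ, Complex.conj_ofReal,
      inner_residualDirection_next hv hkN (hW m hkN) (hp m hkN), hsubdiag m hkN]
    push_cast [p, Complex.coe_algebraMap]
    ring

/-- With `τ_k(δ) = (-1)^{k-1} w_{k-1}(δ)^* (A - δI) v_k`, one has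
`s_k(δ) = h_{k+1,k}/√(h_{k+1,k}² + |τ_k(δ)|²)` and
`c_k(δ) = τ_k(δ)/√(h_{k+1,k}² + |τ_k(δ)|²)`
(`0`-based: `h_{k+1,k}` is the real number `(H ⟨k,_⟩ ⟨k-1,_⟩).re` and `v_k` is `v (k-1)`). -/
theorem stmt11 (n N : ℕ) (hN : 1 ≤ N) (hNn : N ≤ n)
    (A : Matrix (Fin n) (Fin n) ℂ) (b : Fin n → ℂ) (hb : b ≠ 0)
    (v : ℕ → Fin n → ℂ)
    (horth : ∀ i j : ℕ, i < N → j < N → inn (v i) (v j) = if i = j then 1 else 0)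
    (hv1 : v 0 = (((nrm b)⁻¹ : ℝ) : ℂ) • b)
    (H : Matrix (Fin N) (Fin N) ℂ)
    (hHess : ∀ i j : Fin N, (j : ℕ) + 1 < (i : ℕ) → H i j = 0)
    (hsub : ∀ (k : ℕ) (hk : k + 1 < N),
      0 < (H ⟨k + 1, hk⟩ ⟨k, Nat.lt_of_succ_lt hk⟩).re ∧
        (H ⟨k + 1, hk⟩ ⟨k, Nat.lt_of_succ_lt hk⟩).im = 0)
    (harn : ∀ (k : ℕ) (hk : k + 1 < N),
      A.mulVec (v k) = ∑ j : Fin (k + 2),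
        H ⟨(j : ℕ), Nat.lt_of_le_of_lt (Nat.lt_succ_iff.mp j.isLt) hk⟩
          ⟨k, Nat.lt_of_succ_lt hk⟩ • v (j : ℕ))
    (harnN : A.mulVec (v (N - 1)) =
      ∑ j : Fin N, H j ⟨N - 1, Nat.sub_lt hN Nat.one_pos⟩ • v (j : ℕ))
    (q : ℕ → Polynomial ℂ) (hq0 : q 0 = 1)
    (hqrec : ∀ (k : ℕ) (hk : k + 1 < N),
      Polynomial.C (H ⟨k + 1, hk⟩ ⟨k, Nat.lt_of_succ_lt hk⟩) * q (k + 1) =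
        Polynomial.X * q k -
          ∑ j : Fin (k + 1),
            Polynomial.C (H ⟨(j : ℕ), Nat.lt_trans j.isLt hk⟩ ⟨k, Nat.lt_of_succ_lt hk⟩) *
              q (j : ℕ))
    (u : ℂ → ℕ → Fin n → ℂ)
    (humem : ∀ (δ : ℂ) (k : ℕ), k < N →
      u δ k ∈ Submodule.span ℂ {x : Fin n → ℂ | ∃ j < k, x = (A - δ • 1).mulVec (v j)})
    (huperp : ∀ (δ : ℂ) (k : ℕ), k < N →
      ∀ y ∈ Submodule.span ℂ {x : Fin n → ℂ | ∃ j < k, x = (A - δ • 1).mulVec (v j)},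
        inn y (b - u δ k) = 0)
    (r : ℂ → ℕ → Fin n → ℂ) (hr : ∀ δ k, r δ k = b - u δ k)
    (hrne : ∀ (δ : ℂ) (k : ℕ), k < N → r δ k ≠ 0)
    (w : ℂ → ℕ → Fin n → ℂ) (hw : ∀ δ k, w δ k = (((nrm (r δ k))⁻¹ : ℝ) : ℂ) • r δ k)
 :
    ∀ (δ : ℂ) (k : ℕ) (hk1 : 1 ≤ k) (hkN : k < N) (τ : ℂ),
      τ = (-1 : ℂ) ^ (k - 1) * inn (w δ (k - 1)) ((A - δ • 1).mulVec (v (k - 1))) →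
      sigmaP q δ (k - 1) / sigmaP q δ k =
        (H ⟨k, hkN⟩ ⟨k - 1, Nat.lt_of_le_of_lt (Nat.sub_le k 1) hkN⟩).re /
          Real.sqrt ((H ⟨k, hkN⟩ ⟨k - 1, Nat.lt_of_le_of_lt (Nat.sub_le k 1) hkN⟩).re ^ 2 +
            ‖τ‖ ^ 2) ∧
      (-1 : ℂ) ^ k * (q k).eval δ / (sigmaP q δ k : ℂ) =
        τ / ((Real.sqrt ((H ⟨k, hkN⟩ ⟨k - 1, Nat.lt_of_le_of_lt (Nat.sub_le k 1) hkN⟩).re ^ 2 +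
            ‖τ‖ ^ 2) : ℝ) : ℂ) :=
  stmt11_general n N A b hb v horth hv1 H hsub harn q hq0 hqrec u humem huperp r hr w hw
end
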